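/- The Λ-duplicate D has a Gδ-diagonal: the families 𝒢_p = {V(u,i,p) : (u,i) ∈ D}, p ∈ ℕ, form a Gδ-diagonal sequence. In particular, for any two distinct points (u₁,i₁), (u₂,i₂) ∈ D there exists p such that no member of 𝒢_p contains both points. -/

import Mathlib

/-- An element of Kurepa's tree `Λ`: an injective function `t : α → ω` with countable
ordinal domain `α` and coinfinite range.  The function is represented as a total function
on ordinals which takes the junk value `0` outside of the domain. -/
structure Lambda : Type 1 where
  toFun : Ordinal.{0} → ℕ
  dom : Ordinal.{0}
  countable : dom.card ≤ Cardinal.aleph0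
  inj : ∀ β γ, β < dom → γ < dom → toFun β = toFun γ → β = γ
  coinfinite : {n : ℕ | ∀ β, β < dom → toFun β ≠ n}.Infinite
  junk : ∀ β, ¬ β < dom → toFun β = 0

/-- The tree order on `Λ`: `s ≼ t` iff `t` extends `s`. -/
def Lambda.le (s t : Lambda) : Prop :=
  s.dom ≤ t.dom ∧ ∀ β, β < s.dom → s.toFun β = t.toFun β

/-- The strict tree order on `Λ`. -/
def Lambda.lt (s t : Lambda) : Prop := Lambda.le s t ∧ s ≠ t

/-- `r ≺ s` for `r ∈ Λ ∪ {0}` (`none` plays the role of the extra least element `0`). -/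
def precLt : Option Lambda → Lambda → Prop
  | none, _ => True
  | some r, s => Lambda.lt r s

/-- The interval `(r, t] = {s ∈ Λ : r ≺ s ≼ t}`, with `r ∈ Λ ∪ {0}`. -/
def lamIoc (r : Option Lambda) (t : Lambda) : Set Lambda :=
  {s | precLt r s ∧ Lambda.le s t}

/-- The position of the minimum of `t` on the ordinal interval `[δ, β)`. -/
noncomputable def minPos (t : Ordinal.{0} → ℕ) (δ β : Ordinal.{0}) : Ordinal.{0} :=
  sInf {ξ | δ ≤ ξ ∧ ξ < β ∧ ∀ η, δ ≤ η → η < β → t ξ ≤ t η}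

lemma minPos_lt (t : Ordinal.{0} → ℕ) {δ β : Ordinal.{0}} (h : δ < β) : minPos t δ β < β := by
  have hne : {ξ : Ordinal.{0} | δ ≤ ξ ∧ ξ < β ∧ ∀ η, δ ≤ η → η < β → t ξ ≤ t η}.Nonempty := by
    have h1 : {n : ℕ | ∃ ξ : Ordinal.{0}, δ ≤ ξ ∧ ξ < β ∧ t ξ = n}.Nonempty :=
      ⟨t δ, δ, le_refl _, h, rfl⟩
    obtain ⟨ξ, hξ1, hξ2, hξ3⟩ := Nat.sInf_mem h1
    refine ⟨ξ, hξ1, hξ2, fun η h1' h2' => ?_⟩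
    rw [hξ3]
    exact Nat.sInf_le ⟨η, h1', h2', rfl⟩
  obtain ⟨ξ, hξ⟩ := hne
  calc minPos t δ β ≤ ξ := csInf_le (OrderBot.bddBelow _) hξ
    _ < β := hξ.2.1

/-- The sequence `τ` computed from the starting ordinal `β₀` downwards: `τ` is obtained by
repeatedly passing from `β` to the position of the minimum of `t` on `[δ, β)`, stopping upon
reaching `δ`.  The resulting finite sequence `(β_k, …, β_1)` is recorded as a list in the
order `[β_k, …, β_1]` (so concatenation of the lists corresponds to `⌢`). -/
noncomputable def tauFrom (δ : Ordinal.{0}) (t : Ordinal.{0} → ℕ) : Ordinal.{0} → List Ordinal.{0} :=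
  WellFounded.fix wellFounded_lt
    (fun β IH => if h : δ < β then IH (minPos t δ β) (minPos_lt t h) ++ [minPos t δ β] else [])

/-- The finite sequence `τ(s,t)` of ordinals, for `s ≼ t` in `Λ`. -/
noncomputable def tau (s t : Lambda) : List Ordinal.{0} :=
  tauFrom s.dom t.toFun t.dom

/-- `ℓ(s,t)`, the length of `τ(s,t)`. -/
noncomputable def ell (s t : Lambda) : ℕ := (tau s t).length

/-- The underlying set of the `Λ`-duplicate: `D = Λ × {1, -1}`. -/
abbrev Dup : Type 1 := Lambda × ℤˣ

/-- The basic open sets `W(r,t,i)` of the `Λ`-duplicate. -/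
noncomputable def Wset (r : Option Lambda) (t : Lambda) (i : ℤˣ) : Set Dup :=
  {q | q.1 ∈ lamIoc r t ∧ q.2 = (-1) ^ ell q.1 t * i}

/-- The collection of all basic open sets `W(r,t,i)` with `r ≺ t`. -/
noncomputable def WBasis : Set (Set Dup) :=
  {S | ∃ (r : Option Lambda) (t : Lambda) (i : ℤˣ), precLt r t ∧ S = Wset r t i}

/-- The topology of the `Λ`-duplicate, generated by the basic sets `W(r,t,i)`. -/
noncomputable instance : TopologicalSpace Dup := TopologicalSpace.generateFrom WBasis

/-- `p(s,t)`: the value of `t` at the largest entry `β₁` of `τ(s,t)` when `s ≺ t`,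
and `p(t,t) = ∞`. -/
noncomputable def pval (s t : Lambda) : ℕ∞ :=
  match (tau s t).getLast? with
  | none => (⊤ : ℕ∞)
  | some β => (t.toFun β : ℕ∞)

/-- The sets `V(u,i,p) = {(t,j) ∈ D : t ≼ u, p(t,u) ≥ p, j = (-1)^{ℓ(t,u)} i}`. -/
noncomputable def Vset (u : Lambda) (i : ℤˣ) (p : ℕ) : Set Dup :=
  {q | Lambda.le q.1 u ∧ (p : ℕ∞) ≤ pval q.1 u ∧ q.2 = (-1) ^ ell q.1 u * i}

/-!
A point `(t, j)` of `V(u,i,p)` has a basic neighbourhood `W(r,t,j)` inside `V(u,i,p)`: since `t`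
is injective, only finitely many `γ < dom t` have `t γ ≤ max p (u (dom t))`, so `r` can be chosen
so that `t` exceeds this bound on `[dom s, dom t)` for every `s ∈ (r,t]`. Then
`τ(s,u) = τ(s,t) ⌢ τ(t,u)`, which makes the signs match, and `p(s,u) ≥ p` because `p(s,u)` is
the minimum of `u` on `[dom s, dom u)`. The latter description also separates points: if `dom s < dom t` with
`s, t ≼ u`, then `p(s,u) ≤ u (dom s) = t (dom s)`, whereas equal domains force `s = t` and then
the signs agree.
-/

theorem isGδ_diagonal_of_separating {X ι κ : Type*} [TopologicalSpace X] [Countable κ]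
    (V : κ → ι → Set X) (hopen : ∀ p a, IsOpen (V p a)) (hcov : ∀ p x, ∃ a, x ∈ V p a)
    (hsep : ∀ x y, x ≠ y → ∃ p, ∀ a, ¬ (x ∈ V p a ∧ y ∈ V p a)) :
    IsGδ (Set.diagonal X) := by
  have hdiag : Set.diagonal X = ⋂ p, ⋃ a, V p a ×ˢ V p a := by
    ext ⟨x, y⟩
    simp only [Set.mem_diagonal_iff, Set.mem_iInter, Set.mem_iUnion, Set.mem_prod]
    constructor
    · rintro rfl p
      obtain ⟨a, ha⟩ := hcov p x
      exact ⟨a, ha, ha⟩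
    · intro h
      by_contra hne
      obtain ⟨p, hp⟩ := hsep x y hne
      obtain ⟨a, ha⟩ := h p
      exact hp a ha
  rw [hdiag]
  exact .iInter fun p => (isOpen_iUnion fun a => (hopen p a).prod (hopen p a)).isGδ

namespace Lambda

theorem ext {s t : Lambda} (hd : s.dom = t.dom)
    (hf : ∀ β, β < s.dom → s.toFun β = t.toFun β) : s = t := by
  obtain ⟨f, d, _, _, _, hj⟩ := s
  obtain ⟨f', d', _, _, _, hj'⟩ := t
  dsimp only at hd hf
  subst hd
  obtain rfl : f = f' := funext fun β => by
    by_cases h : β < d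
    · exact hf β h
    · rw [hj β h, hj' β h]
  rfl

theorem le_refl (s : Lambda) : s.le s := ⟨le_rfl, fun _ _ => rfl⟩

theorem le_trans {s t u : Lambda} (hst : s.le t) (htu : t.le u) : s.le u :=
  ⟨hst.1.trans htu.1, fun β hβ => (hst.2 β hβ).trans (htu.2 β (hβ.trans_le hst.1))⟩

theorem eq_of_le_of_dom_eq {s t u : Lambda} (hs : s.le u) (ht : t.le u)
    (hd : s.dom = t.dom) : s = t :=
  ext hd fun β hβ => (hs.2 β hβ).trans (ht.2 β (hd ▸ hβ)).symm

theorem dom_lt_of_lt {s t : Lambda} (h : s.lt t) : s.dom < t.dom :=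
  h.1.1.lt_of_ne fun hd => h.2 (eq_of_le_of_dom_eq h.1 (le_refl t) hd)

noncomputable def restrict (t : Lambda) (γ : Ordinal.{0}) (h : γ ≤ t.dom) : Lambda where
  toFun β := if β < γ then t.toFun β else 0
  dom := γ
  countable := (Ordinal.card_le_card h).trans t.countable
  inj β β' hβ hβ' he := by
    simp only [if_pos hβ, if_pos hβ'] at he
    exact t.inj β β' (hβ.trans_le h) (hβ'.trans_le h) he
  coinfinite := t.coinfinite.mono fun n hn β hβ => by
    simp only [if_pos hβ]
    exact hn β (hβ.trans_le h)
  junk _ hβ := if_neg hβ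

theorem restrict_lt (t : Lambda) {γ : Ordinal.{0}} (h : γ < t.dom) :
    (t.restrict γ h.le).lt t :=
  ⟨⟨h.le, fun _ hβ => if_pos hβ⟩, fun he => h.ne (congrArg dom he)⟩

theorem finite_setOf_toFun_le (t : Lambda) (K : ℕ) :
    {γ | γ < t.dom ∧ t.toFun γ ≤ K}.Finite := by
  refine Set.Finite.of_finite_image (f := t.toFun) ((Set.finite_le_nat K).subset ?_) ?_
  · rintro _ ⟨γ, hγ, rfl⟩
    exact hγ.2
  · exact fun γ hγ γ' hγ' => t.inj γ γ' hγ.1 hγ'.1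

theorem exists_precLt_forall_lamIoc_lt_toFun (t : Lambda) (K : ℕ) :
    ∃ r, precLt r t ∧ ∀ s ∈ lamIoc r t, ∀ η, s.dom ≤ η → η < t.dom → K < t.toFun η := by
  rcases eq_or_ne t.dom 0 with h0 | h0
  · exact ⟨none, trivial, fun s _ η _ hη => (not_lt_zero (h0 ▸ hη)).elim⟩
  set A := {γ | γ < t.dom ∧ t.toFun γ ≤ K}
  have hAfin : A.Finite := t.finite_setOf_toFun_le K
  have hA : sSup A < t.dom := by
    rcases A.eq_empty_or_nonempty with he | hne
    · rw [he, csSup_empty]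
      exact pos_iff_ne_zero.mpr h0
    · exact (hne.csSup_mem hAfin).1
  refine ⟨some (t.restrict _ hA.le), t.restrict_lt hA, fun s hs η hsη hη => ?_⟩
  by_contra! hle
  have hsA : sSup A < s.dom := dom_lt_of_lt hs.1
  exact (le_csSup hAfin.bddAbove ⟨hη, hle⟩).not_gt (hsA.trans_le hsη)

end Lambda

section minPos

variable (t : Ordinal.{0} → ℕ) {δ μ β : Ordinal.{0}}

theorem minPos_spec (h : δ < β) :
    δ ≤ minPos t δ β ∧ minPos t δ β < β ∧ ∀ η, δ ≤ η → η < β → t (minPos t δ β) ≤ t η := by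
  have hδ : δ ∈ Set.Ico δ β := ⟨le_rfl, h⟩
  set ξ := Function.argminOn t (Set.Ico δ β) ⟨δ, hδ⟩
  have hξ : ξ ∈ Set.Ico δ β := Function.argminOn_mem t _ _
  exact csInf_mem (show {ξ | δ ≤ ξ ∧ ξ < β ∧ ∀ η, δ ≤ η → η < β → t ξ ≤ t η}.Nonempty from
    ⟨ξ, hξ.1, hξ.2, fun η h1 h2 => not_lt.mp (Function.not_lt_argminOn t (Set.Ico δ β) ⟨h1, h2⟩)⟩)

theorem minPos_eq_of_lt_of_lt (hδμ : δ ≤ μ) (hμβ : μ < β)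
    (H : ∀ η, δ ≤ η → η < μ → t μ < t η) : minPos t δ β = minPos t μ β := by
  unfold minPos
  congr 1
  ext ξ
  constructor
  · rintro ⟨h1, h2, h3⟩
    refine ⟨not_lt.mp fun hξ => (h3 μ hδμ hμβ).not_gt (H ξ h1 hξ), h2,
      fun η hη1 hη2 => h3 η (hδμ.trans hη1) hη2⟩
  · rintro ⟨h1, h2, h3⟩
    refine ⟨hδμ.trans h1, h2, fun η hη1 hη2 => ?_⟩
    rcases lt_or_ge η μ with hη | hη
    · exact (h3 μ le_rfl hμβ).trans (H η hη1 hη).le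
    · exact h3 η hη hη2

theorem minPos_congr {t' : Ordinal.{0} → ℕ} (h : ∀ η, δ ≤ η → η < β → t η = t' η) :
    minPos t δ β = minPos t' δ β := by
  unfold minPos
  congr 1
  ext ξ
  refine and_congr_right fun h1 => and_congr_right fun h2 => forall₂_congr fun η hη1 => ?_
  exact forall_congr' fun hη2 => by rw [h ξ h1 h2, h η hη1 hη2]

end minPos

section tauFrom

variable {δ μ β : Ordinal.{0}} (t : Ordinal.{0} → ℕ)

theorem tauFrom_eq (β : Ordinal.{0}) : tauFrom δ t β =
    if _ : δ < β then tauFrom δ t (minPos t δ β) ++ [minPos t δ β] else [] := by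
  unfold tauFrom
  rw [WellFounded.fix_eq]

theorem tauFrom_of_not_lt (h : ¬ δ < β) : tauFrom δ t β = [] := by
  rw [tauFrom_eq, dif_neg h]

theorem tauFrom_of_lt (h : δ < β) :
    tauFrom δ t β = tauFrom δ t (minPos t δ β) ++ [minPos t δ β] := by
  rw [tauFrom_eq, dif_pos h]

theorem tauFrom_getLast?_of_lt (h : δ < β) :
    (tauFrom δ t β).getLast? = some (minPos t δ β) := by
  rw [tauFrom_of_lt t h, List.getLast?_concat]

theorem tauFrom_congr {t' : Ordinal.{0} → ℕ} (β : Ordinal.{0})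
    (h : ∀ η, δ ≤ η → η < β → t η = t' η) : tauFrom δ t β = tauFrom δ t' β := by
  induction β using WellFoundedLT.induction with
  | ind β IH =>
    by_cases hδ : δ < β
    · have hm : minPos t δ β = minPos t' δ β := minPos_congr t h
      have hlt : minPos t δ β < β := (minPos_spec t hδ).2.1
      rw [tauFrom_of_lt t hδ, tauFrom_of_lt t' hδ, ← hm,
        IH _ hlt fun η h1 h2 => h η h1 (h2.trans hlt)]
    · rw [tauFrom_of_not_lt t hδ, tauFrom_of_not_lt t' hδ]

theorem tauFrom_append (hδμ : δ ≤ μ) (H : ∀ η, δ ≤ η → η < μ → t μ < t η) (hμβ : μ ≤ β) :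
    tauFrom δ t β = tauFrom δ t μ ++ tauFrom μ t β := by
  induction β using WellFoundedLT.induction with
  | ind β IH =>
    rcases hμβ.eq_or_lt with rfl | hμβ
    · rw [tauFrom_of_not_lt t (lt_irrefl μ), List.append_nil]
    · obtain ⟨hle, hlt, -⟩ := minPos_spec t hμβ
      rw [tauFrom_of_lt t (hδμ.trans_lt hμβ), tauFrom_of_lt t hμβ,
        minPos_eq_of_lt_of_lt t hδμ hμβ H, IH _ hlt hle, List.append_assoc]

end tauFrom

theorem tau_self (t : Lambda) : tau t t = [] := tauFrom_of_not_lt _ (lt_irrefl _)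

theorem ell_self (t : Lambda) : ell t t = 0 := by
  rw [ell, tau_self, List.length_nil]

theorem tau_append {s t u : Lambda} (hst : s.le t) (htu : t.le u)
    (H : ∀ η, s.dom ≤ η → η < t.dom → u.toFun t.dom < u.toFun η) :
    tau s u = tau s t ++ tau t u := by
  rw [tau, tau, tau, tauFrom_append u.toFun hst.1 H htu.1,
    tauFrom_congr u.toFun t.dom fun η _ hη => (htu.2 η hη).symm]

theorem ell_add {s t u : Lambda} (hst : s.le t) (htu : t.le u)
    (H : ∀ η, s.dom ≤ η → η < t.dom → u.toFun t.dom < u.toFun η) :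
    ell s u = ell s t + ell t u := by
  rw [ell, ell, ell, tau_append hst htu H, List.length_append]

theorem le_pval_iff {s u : Lambda} {n : ℕ} :
    (n : ℕ∞) ≤ pval s u ↔ ∀ η, s.dom ≤ η → η < u.dom → n ≤ u.toFun η := by
  by_cases hsu : s.dom < u.dom
  · obtain ⟨h1, h2, h3⟩ := minPos_spec u.toFun hsu
    rw [pval, tau, tauFrom_getLast?_of_lt _ hsu, Nat.cast_le]
    exact ⟨fun hn η hη1 hη2 => hn.trans (h3 η hη1 hη2), fun hn => hn _ h1 h2⟩
  · rw [pval, tau, tauFrom_of_not_lt _ hsu]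
    exact iff_of_true le_top fun η hη1 hη2 => absurd (hη1.trans_lt hη2) hsu

theorem mem_Vset_self (p : ℕ) (x : Dup) : x ∈ Vset x.1 x.2 p := by
  refine ⟨Lambda.le_refl _, ?_, ?_⟩
  · rw [pval, tau_self]
    exact le_top
  · rw [ell_self, pow_zero, one_mul]

theorem exists_Wset_subset_Vset {u : Lambda} {i : ℤˣ} {p : ℕ} {x : Dup} (hx : x ∈ Vset u i p) :
    ∃ r, precLt r x.1 ∧ x ∈ Wset r x.1 x.2 ∧ Wset r x.1 x.2 ⊆ Vset u i p := by
  obtain ⟨t, j⟩ := x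
  obtain ⟨htu, hp, hj⟩ := hx
  obtain ⟨r, hr, hlarge⟩ := t.exists_precLt_forall_lamIoc_lt_toFun (max p (u.toFun t.dom))
  refine ⟨r, hr, ⟨⟨hr, Lambda.le_refl t⟩, by rw [ell_self, pow_zero, one_mul]⟩, ?_⟩
  rintro ⟨s, j'⟩ ⟨hs, hj'⟩
  have hsu : ∀ η, s.dom ≤ η → η < t.dom → max p (u.toFun t.dom) < u.toFun η :=
    fun η h1 h2 => htu.2 η h2 ▸ hlarge s hs η h1 h2
  refine ⟨Lambda.le_trans hs.2 htu, le_pval_iff.mpr fun η hη1 hη2 => ?_, ?_⟩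
  · rcases lt_or_ge η t.dom with hη | hη
    · exact (le_max_left _ _).trans (hsu η hη1 hη).le
    · exact le_pval_iff.mp hp η hη hη2
  · dsimp only at hj hj' ⊢
    rw [hj', hj, ell_add hs.2 htu fun η h1 h2 => (le_max_right _ _).trans_lt (hsu η h1 h2),
      pow_add, mul_assoc]

theorem isOpen_Vset (u : Lambda) (i : ℤˣ) (p : ℕ) : IsOpen (Vset u i p) := by
  refine isOpen_iff_forall_mem_open.mpr fun x hx => ?_
  obtain ⟨r, hr, hxW, hWV⟩ := exists_Wset_subset_Vset hx
  exact ⟨_, hWV, TopologicalSpace.isOpen_generateFrom_of_mem ⟨r, x.1, x.2, hr, rfl⟩, hxW⟩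

theorem le_toFun_of_mem_Vset {u : Lambda} {i : ℤˣ} {p : ℕ} {x y : Dup} (hx : x ∈ Vset u i p)
    (hy : y ∈ Vset u i p) (hd : x.1.dom < y.1.dom) : p ≤ y.1.toFun x.1.dom := by
  rw [hy.1.2 _ hd]
  exact le_pval_iff.mp hx.2.1 _ le_rfl (hd.trans_le hy.1.1)

theorem exists_separating_Vset {x y : Dup} (hxy : x ≠ y) :
    ∃ p : ℕ, ∀ u i, ¬ (x ∈ Vset u i p ∧ y ∈ Vset u i p) := by
  refine ⟨max (y.1.toFun x.1.dom) (x.1.toFun y.1.dom) + 1, fun u i ⟨hx, hy⟩ => ?_⟩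
  rcases lt_trichotomy x.1.dom y.1.dom with hd | hd | hd
  · have := le_toFun_of_mem_Vset hx hy hd
    omega
  · have h1 : x.1 = y.1 := Lambda.eq_of_le_of_dom_eq hx.1 hy.1 hd
    exact hxy (Prod.ext h1 (by rw [hx.2.2, hy.2.2, h1]))
  · have := le_toFun_of_mem_Vset hy hx hd
    omega

/-- The `Λ`-duplicate `D` has a Gδ-diagonal, witnessed by the families
`𝒢 p = {V(u,i,p) : (u,i) ∈ D}`: these consist of open sets, cover `D`, and for any two
distinct points of `D` there is `p` such that no member of `𝒢 p` contains both points. -/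
theorem dup_gdelta_diagonal :
    IsGδ (Set.diagonal Dup) ∧
    (∀ (p : ℕ) (u : Lambda) (i : ℤˣ), IsOpen (Vset u i p)) ∧
    (∀ (p : ℕ) (x : Dup), ∃ (u : Lambda) (i : ℤˣ), x ∈ Vset u i p) ∧
    (∀ x y : Dup, x ≠ y → ∃ p : ℕ, ∀ (u : Lambda) (i : ℤˣ),
      ¬ (x ∈ Vset u i p ∧ y ∈ Vset u i p)) := by
  have hcov (p : ℕ) (x : Dup) : ∃ (u : Lambda) (i : ℤˣ), x ∈ Vset u i p :=
    ⟨x.1, x.2, mem_Vset_self p x⟩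
  refine ⟨?_, fun p u i => isOpen_Vset u i p, hcov, fun x y => exists_separating_Vset⟩
  refine isGδ_diagonal_of_separating (fun p (a : Dup) => Vset a.1 a.2 p)
    (fun p a => isOpen_Vset a.1 a.2 p) (fun p x => ?_) (fun x y hxy => ?_)
  · obtain ⟨u, i, h⟩ := hcov p x
    exact ⟨(u, i), h⟩
  · obtain ⟨p, hp⟩ := exists_separating_Vset hxy
    exact ⟨p, fun a => hp a.1 a.2⟩
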